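/- arXiv:2403.19017 — 8 statements merged into one kernel-verified Lean document; each statement's English description precedes it below -/
import Mathlib

section
/- For every real d > 1, ∫₀¹ ln(1/z^d − 1) dz = d − ∑_{m=1}^∞ 1/(m(md+1)). -/
open Real MeasureTheory Set Filter

lemma my_integrableOn_log : IntegrableOn Real.log (Set.Ioc (0:ℝ) 1) := by
  have hg : IntegrableOn (fun z : ℝ => 2 * z ^ (-(1/2) : ℝ)) (Set.Ioc (0:ℝ) 1) := by
    have := (intervalIntegral.intervalIntegrable_rpow' (a := 0) (b := 1)
      (r := -(1/2)) (by norm_num))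
    rw [intervalIntegrable_iff_integrableOn_Ioc_of_le zero_le_one] at this
    exact this.const_mul 2
  refine hg.mono' Real.measurable_log.aestronglyMeasurable ?_
  rw [ae_restrict_iff' measurableSet_Ioc]
  filter_upwards with z hz
  have h0 : 0 < z := hz.1
  have hr : (0:ℝ) < z ^ (-(1/2) : ℝ) := Real.rpow_pos_of_pos h0 _
  have hlog : Real.log z ≤ 0 := Real.log_nonpos h0.le hz.2
  rw [Real.norm_eq_abs, abs_of_nonpos hlog]
  have h1 : Real.log (z ^ (-(1/2) : ℝ)) ≤ z ^ (-(1/2) : ℝ) - 1 :=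
    Real.log_le_sub_one_of_pos hr
  rw [Real.log_rpow h0] at h1
  linarith

lemma my_tendsto (f : ℝ → ℝ) (hf : IntegrableOn f (Set.Ioc (0:ℝ) 1)) :
    Tendsto (fun ε => ∫ z in ε..1, f z) (nhdsWithin 0 (Set.Ioo (0:ℝ) 1))
      (nhds (∫ z in (0:ℝ)..1, f z)) := by
  have hIcc : IntegrableOn f (Set.uIcc (0:ℝ) 1) := by
    rw [Set.uIcc_of_le zero_le_one, integrableOn_Icc_iff_integrableOn_Ioc]
    exact hf
  have hcont : ContinuousOn (fun x => ∫ t in x..(1:ℝ), f t) (Set.uIcc (0:ℝ) 1) :=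
    intervalIntegral.continuousOn_primitive_interval_left hIcc
  have h0 : (0:ℝ) ∈ Set.uIcc (0:ℝ) 1 := Set.left_mem_uIcc
  have := (hcont 0 h0).tendsto
  exact this.mono_left (nhdsWithin_mono _ (by
    rw [Set.uIcc_of_le zero_le_one]; exact Set.Ioo_subset_Icc_self))

instance my_neBot : (nhdsWithin (0:ℝ) (Set.Ioo (0:ℝ) 1)).NeBot := by
  apply mem_closure_iff_nhdsWithin_neBot.mp
  rw [closure_Ioo one_ne_zero.symm]
  exact ⟨le_rfl, zero_le_one⟩

lemma my_integral_log : ∫ z in (0:ℝ)..1, Real.log z = -1 := by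
  have h1 := my_tendsto Real.log my_integrableOn_log
  have h2 : Tendsto (fun ε => ∫ z in ε..1, Real.log z)
      (nhdsWithin 0 (Set.Ioo (0:ℝ) 1)) (nhds (-1)) := by
    have hc : Continuous (fun ε : ℝ => -1 + ε - ε * Real.log ε) :=
      (continuous_const.add continuous_id).sub Real.continuous_mul_log
    have h3 : Tendsto (fun ε : ℝ => -1 + ε - ε * Real.log ε)
        (nhdsWithin 0 (Set.Ioo (0:ℝ) 1)) (nhds (-1)) := by
      have := hc.tendsto 0
      simp only [Real.log_zero, mul_zero, add_zero, sub_zero] at this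
      simpa using this.mono_left nhdsWithin_le_nhds
    refine h3.congr' ?_
    filter_upwards [self_mem_nhdsWithin] with ε hε
    rw [integral_log]
    simp [Real.log_one]
    ring
  exact tendsto_nhds_unique h1 h2

lemma my_series (d : ℝ) (hd : 1 < d) :
    ∫ z in (0:ℝ)..1, Real.log (1 - z ^ d)
      = -∑' m : ℕ, 1 / (((m : ℝ) + 1) * (((m : ℝ) + 1) * d + 1)) := by
  have h0d : (0:ℝ) < d := by linarith
  set μ := volume.restrict (Set.Ioo (0:ℝ) 1) with hμ
  set F : ℕ → ℝ → ℝ := fun m z => (z ^ d) ^ (m + 1) / ((m : ℝ) + 1) with hF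
  have hcontd : Continuous fun z : ℝ => z ^ d :=
    continuous_iff_continuousAt.mpr fun x =>
      Real.continuousAt_rpow_const x d (Or.inr h0d.le)
  have hcF : ∀ m, Continuous (F m) := fun m => (hcontd.pow (m + 1)).div_const _
  have hFint : ∀ m, Integrable (F m) μ := fun m =>
    ((hcF m).integrableOn_Icc.mono_set Set.Ioo_subset_Icc_self)
  have hvalF : ∀ m : ℕ, ∫ z, F m z ∂μ
      = 1 / (((m : ℝ) + 1) * (((m : ℝ) + 1) * d + 1)) := by
    intro m
    rw [hμ, ← MeasureTheory.integral_Ioc_eq_integral_Ioo,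
      ← intervalIntegral.integral_of_le zero_le_one]
    have hpow : ∀ z ∈ Set.uIcc (0:ℝ) 1, F m z = z ^ (d * ((m:ℝ) + 1)) / ((m : ℝ) + 1) := by
      intro z hz
      rw [Set.uIcc_of_le zero_le_one] at hz
      show (z ^ d) ^ (m + 1) / ((m : ℝ) + 1) = _
      have : (z ^ d) ^ (m + 1) = z ^ (d * ((m:ℝ)+1)) := by
        rw [Real.rpow_mul hz.1, ← Real.rpow_natCast (z ^ d) (m+1)]
        push_cast
        ring_nf
      rw [this]
    rw [intervalIntegral.integral_congr hpow, intervalIntegral.integral_div,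
      integral_rpow (Or.inl (by
        have : (0:ℝ) < d * ((m:ℝ)+1) := by positivity
        linarith))]
    rw [Real.one_rpow, Real.zero_rpow (by positivity)]
    field_simp
    ring
  have hval : ∀ m : ℕ, ∫ z, ‖F m z‖ ∂μ
      = 1 / (((m : ℝ) + 1) * (((m : ℝ) + 1) * d + 1)) := by
    intro m
    have hnn : ∀ z ∈ Set.Ioo (0:ℝ) 1, ‖F m z‖ = F m z := by
      intro z hz
      rw [Real.norm_eq_abs, abs_of_nonneg]
      exact div_nonneg (pow_nonneg (Real.rpow_nonneg hz.1.le d) _) (by positivity)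
    rw [hμ, MeasureTheory.setIntegral_congr_fun measurableSet_Ioo hnn, ← hμ, hvalF]
  have hsum : Summable fun m : ℕ => ∫ z, ‖F m z‖ ∂μ := by
    simp_rw [hval]
    have hb : Summable fun m : ℕ => 1 / (((m:ℝ) + 1) * ((m:ℝ) + 1)) := by
      have := (Real.summable_one_div_nat_pow (p := 2)).mpr one_lt_two
      have h2 := (summable_nat_add_iff 1).mpr this
      refine h2.congr fun m => ?_
      push_cast
      ring
    refine Summable.of_nonneg_of_le (fun m => by positivity) (fun m => ?_) hb
    gcongr
    nlinarith [Nat.cast_nonneg (α := ℝ) m]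
  have hae : ∀ᵐ z ∂μ, HasSum (fun m => F m z) (-Real.log (1 - z ^ d)) := by
    rw [hμ, ae_restrict_iff' measurableSet_Ioo]
    filter_upwards with z hz
    have hzd : z ^ d < 1 := Real.rpow_lt_one hz.1.le hz.2 h0d
    have habs : |z ^ d| < 1 := by
      rw [abs_of_nonneg (Real.rpow_nonneg hz.1.le d)]; exact hzd
    exact Real.hasSum_pow_div_log_of_abs_lt_one habs
  have hkey := MeasureTheory.integral_tsum_of_summable_integral_norm hFint hsum
  simp_rw [hvalF] at hkey
  have hrhs : ∫ z, (∑' m, F m z) ∂μ = ∫ z, (-Real.log (1 - z ^ d)) ∂μ := by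
    refine MeasureTheory.integral_congr_ae ?_
    filter_upwards [hae] with z hz
    exact hz.tsum_eq
  rw [hrhs] at hkey
  rw [intervalIntegral.integral_of_le zero_le_one, MeasureTheory.integral_Ioc_eq_integral_Ioo]
  rw [MeasureTheory.integral_neg] at hkey
  linarith

lemma my_G_integrable (d : ℝ) (hd : 1 < d) (hlog01 : IntervalIntegrable Real.log volume 0 1) :
    IntervalIntegrable (fun z => Real.log (1 - z ^ d)) volume 0 1 := by
  have h0d : (0:ℝ) < d := by linarith
  have hlog1z : IntervalIntegrable (fun z : ℝ => Real.log (1 - z)) volume 0 1 := by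
    have := hlog01.comp_sub_left 1
    norm_num at this
    exact this.symm
  rw [intervalIntegrable_iff_integrableOn_Ioc_of_le zero_le_one] at hlog1z ⊢
  have hcontd : Continuous fun z : ℝ => z ^ d :=
    continuous_iff_continuousAt.mpr fun x =>
      Real.continuousAt_rpow_const x d (Or.inr h0d.le)
  refine Integrable.mono hlog1z ?_ ?_
  · exact (Real.measurable_log.comp
      (measurable_const.sub hcontd.measurable)).aestronglyMeasurable
  · rw [ae_restrict_iff' measurableSet_Ioc]
    filter_upwards with z hz
    rcases eq_or_lt_of_le hz.2 with h1 | h1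
    · subst h1
      simp [Real.one_rpow]
    · have h0 : 0 < z := hz.1
      have hzd : z ^ d ≤ z := by
        calc z ^ d ≤ z ^ (1:ℝ) := Real.rpow_le_rpow_of_exponent_ge h0 h1.le hd.le
        _ = z := Real.rpow_one z
      have h1z : 0 < 1 - z := by linarith
      have h1zd : 0 < 1 - z ^ d := by linarith
      have hle : 1 - z ≤ 1 - z ^ d := by linarith
      have hlz : Real.log (1 - z ^ d) ≤ 0 :=
        Real.log_nonpos h1zd.le (by nlinarith [Real.rpow_pos_of_pos h0 d])
      have hlz2 : Real.log (1 - z) ≤ Real.log (1 - z ^ d) :=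
        Real.log_le_log h1z hle
      rw [Real.norm_eq_abs, Real.norm_eq_abs, abs_of_nonpos hlz,
        abs_of_nonpos (Real.log_nonpos h1z.le (by linarith))]
      linarith


theorem stmt_2 (d : ℝ) (hd : 1 < d) :
    (∫ z in (0:ℝ)..1, Real.log (1 / z ^ d - 1))
      = d - ∑' m : ℕ, 1 / (((m : ℝ) + 1) * (((m : ℝ) + 1) * d + 1)) := by
  have h0d : (0:ℝ) < d := by linarith
  have hlog01 : IntervalIntegrable Real.log volume 0 1 := by
    rw [intervalIntegrable_iff_integrableOn_Ioc_of_le zero_le_one]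
    exact my_integrableOn_log
  have hG := my_G_integrable d hd hlog01
  have key : ∀ z ∈ Set.uIcc (0:ℝ) 1,
      Real.log (1 / z ^ d - 1) = Real.log (1 - z ^ d) - d * Real.log z := by
    intro z hz
    rw [Set.uIcc_of_le zero_le_one] at hz
    rcases eq_or_lt_of_le hz.1 with h0 | h0
    · rw [← h0]
      simp [Real.zero_rpow h0d.ne']
    rcases eq_or_lt_of_le hz.2 with h1 | h1
    · rw [h1]
      simp [Real.one_rpow]
    · have hzd : 0 < z ^ d := Real.rpow_pos_of_pos h0 d
      have h1zd : 0 < 1 - z ^ d := by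
        have : z ^ d < 1 := Real.rpow_lt_one h0.le h1 h0d
        linarith
      rw [show 1 / z ^ d - 1 = (1 - z ^ d) / z ^ d by field_simp,
        Real.log_div h1zd.ne' hzd.ne', Real.log_rpow h0]
  rw [intervalIntegral.integral_congr key,
    intervalIntegral.integral_sub hG (hlog01.const_mul d),
    my_series d hd, intervalIntegral.integral_const_mul, my_integral_log]
  ring
end

section
/- Let (a_n) be a strictly decreasing sequence of positive reals with a_{n+1}/a_n < ν₀ for all n, where 0 < ν₀ < 1. Then for each n, ∑_{m=1}^{n−1} ln((a_m/a_n + 1)/(a_m/a_n − 1)) ≤ 2ν₀/(1−ν₀)². -/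
/-- `a n` stands for `a_{n+1}` in the paper (indexing from 1). -/
theorem stmt_6 (a : ℕ → ℝ) (ν₀ : ℝ) (hν₀ : 0 < ν₀) (hν₀' : ν₀ < 1)
    (hpos : ∀ n, 0 < a n) (hdec : ∀ n, a (n + 1) < ν₀ * a n) :
    ∀ n : ℕ, ∑ m ∈ Finset.range n, Real.log ((a m / a n + 1) / (a m / a n - 1))
      ≤ 2 * ν₀ / (1 - ν₀) ^ 2 := by
  -- a (m + k) < ν₀ ^ k * a m for k ≥ 1
  have key : ∀ m k : ℕ, a (m + (k + 1)) < ν₀ ^ (k + 1) * a m := by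
    intro m k
    induction k with
    | zero => simpa using hdec m
    | succ k ih =>
      have := hdec (m + (k + 1))
      calc a (m + (k + 1) + 1) < ν₀ * a (m + (k + 1)) := this
        _ < ν₀ * (ν₀ ^ (k + 1) * a m) := by
            exact (mul_lt_mul_iff_right₀ hν₀).mpr ih
        _ = ν₀ ^ (k + 1 + 1) * a m := by ring
  intro n
  have hν₀pos : (0:ℝ) < 1 - ν₀ := by linarith
  -- termwise bound
  have term : ∀ m ∈ Finset.range n,
      Real.log ((a m / a n + 1) / (a m / a n - 1)) ≤ 2 * ν₀ ^ (n - m) / (1 - ν₀) := by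
    intro m hm
    rw [Finset.mem_range] at hm
    set k := n - m with hk
    have hk1 : 1 ≤ k := by omega
    have hkn : n = m + k := by omega
    have hpow : (0:ℝ) < ν₀ ^ k := pow_pos hν₀ k
    have hpowle : ν₀ ^ k ≤ ν₀ := by
      calc ν₀ ^ k ≤ ν₀ ^ 1 := pow_le_pow_of_le_one hν₀.le hν₀'.le hk1
        _ = ν₀ := pow_one ν₀
    have han : a n < ν₀ ^ k * a m := by
      obtain ⟨j, hj⟩ : ∃ j, k = j + 1 := ⟨k - 1, by omega⟩
      rw [hkn, hj]; exact key m j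
    set r := a m / a n with hr
    have hanpos := hpos n
    have hrgt : 1 < ν₀ ^ k * r := by
      rw [hr, ← mul_div_assoc, lt_div_iff₀ hanpos, one_mul]
      exact han
    have hr1 : (1 - ν₀) / ν₀ ^ k ≤ r - 1 := by
      rw [div_le_iff₀ hpow]
      nlinarith [hrgt, hpowle]
    have hr1pos : (0:ℝ) < r - 1 := lt_of_lt_of_le (by positivity) hr1
    have hrpos : (0:ℝ) < r := by linarith
    have heq : (r + 1) / (r - 1) = 1 + 2 / (r - 1) := by
      field_simp
      ring
    rw [heq]
    have hlog : Real.log (1 + 2 / (r - 1)) ≤ 2 / (r - 1) := by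
      have := Real.log_le_sub_one_of_pos (x := 1 + 2 / (r - 1)) (by positivity)
      linarith
    have hbound : 2 / (r - 1) ≤ 2 * ν₀ ^ k / (1 - ν₀) := by
      have h2 : 2 / (r - 1) ≤ 2 / ((1 - ν₀) / ν₀ ^ k) :=
        div_le_div_of_nonneg_left (by norm_num) (by positivity) hr1
      calc 2 / (r - 1) ≤ 2 / ((1 - ν₀) / ν₀ ^ k) := h2
        _ = 2 * ν₀ ^ k / (1 - ν₀) := by
            rw [div_div_eq_mul_div]
    linarith
  calc ∑ m ∈ Finset.range n, Real.log ((a m / a n + 1) / (a m / a n - 1))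
      ≤ ∑ m ∈ Finset.range n, 2 * ν₀ ^ (n - m) / (1 - ν₀) := Finset.sum_le_sum term
    _ = (2 / (1 - ν₀)) * ∑ m ∈ Finset.range n, ν₀ ^ (n - m) := by
        rw [Finset.mul_sum]; apply Finset.sum_congr rfl; intro m hm; ring
    _ = (2 / (1 - ν₀)) * ∑ j ∈ Finset.range n, ν₀ ^ (j + 1) := by
        congr 1
        rw [← Finset.sum_range_reflect]
        apply Finset.sum_congr rfl
        intro m hm
        rw [Finset.mem_range] at hm
        congr 1
        omega
    _ = (2 / (1 - ν₀)) * (ν₀ * ∑ j ∈ Finset.range n, ν₀ ^ j) := by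
        congr 1
        rw [Finset.mul_sum]
        apply Finset.sum_congr rfl
        intro j _
        ring
    _ ≤ (2 / (1 - ν₀)) * (ν₀ * (1 / (1 - ν₀))) := by
        apply mul_le_mul_of_nonneg_left _ (by positivity)
        apply mul_le_mul_of_nonneg_left _ hν₀.le
        have hgeom : ∑ j ∈ Finset.range n, ν₀ ^ j = (1 - ν₀ ^ n) / (1 - ν₀) := by
          rw [geom_sum_eq (by linarith : ν₀ ≠ 1)]
          rw [div_eq_div_iff (by linarith) (by linarith)]
          ring
        rw [hgeom]
        gcongr
        nlinarith [pow_pos hν₀ n]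
    _ = 2 * ν₀ / (1 - ν₀) ^ 2 := by
        field_simp
end

section
/- Let (a_n) be positive reals with a_{n+1}/a_n < ν₀ and (b_n) positive reals with ν₁ < b_{n+1}/b_n < ν₂ for all n, where 0 < ν₀ < ν₁ < ν₂ < 1. Define φ_{ij} := (b_i/b_j)/(1 + a_i/a_j). Then φ_{ij} ≤ μ^{|i−j|} for all i, j ∈ ℕ, where μ := max(ν₀/ν₁, ν₂) < 1. -/
theorem stmt_8 (a b : ℕ → ℝ) (ν₀ ν₁ ν₂ : ℝ)
    (h0 : 0 < ν₀) (h01 : ν₀ < ν₁) (h12 : ν₁ < ν₂) (h2 : ν₂ < 1)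
    (hapos : ∀ n, 0 < a n) (hbpos : ∀ n, 0 < b n)
    (ha : ∀ n, a (n + 1) < ν₀ * a n)
    (hb₁ : ∀ n, ν₁ * b n < b (n + 1)) (hb₂ : ∀ n, b (n + 1) < ν₂ * b n) :
    ∀ i j : ℕ, (b i / b j) / (1 + a i / a j)
      ≤ (max (ν₀ / ν₁) ν₂) ^ (max i j - min i j) := by
  have hν₁ : 0 < ν₁ := h0.trans h01
  have hν₂ : 0 < ν₂ := hν₁.trans h12
  set μ := max (ν₀ / ν₁) ν₂ with hμ
  have hμ0 : 0 ≤ μ := le_trans hν₂.le (le_max_right _ _)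
  have Ha : ∀ n k, a (n + k) ≤ ν₀ ^ k * a n := by
    intro n k
    induction k with
    | zero => simp
    | succ k ih =>
      have h1 := ha (n + k)
      have h2 : ν₀ * a (n + k) ≤ ν₀ * (ν₀ ^ k * a n) :=
        mul_le_mul_of_nonneg_left ih h0.le
      have : a (n + (k + 1)) ≤ ν₀ * (ν₀ ^ k * a n) := by
        have : n + (k + 1) = (n + k) + 1 := by ring
        rw [this]; linarith
      calc a (n + (k + 1)) ≤ ν₀ * (ν₀ ^ k * a n) := this
        _ = ν₀ ^ (k + 1) * a n := by ring
  have Hb1 : ∀ n k, ν₁ ^ k * b n ≤ b (n + k) := by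
    intro n k
    induction k with
    | zero => simp
    | succ k ih =>
      have h1 := hb₁ (n + k)
      have h2 : ν₁ * (ν₁ ^ k * b n) ≤ ν₁ * b (n + k) :=
        mul_le_mul_of_nonneg_left ih hν₁.le
      have heq : n + (k + 1) = (n + k) + 1 := by ring
      calc ν₁ ^ (k + 1) * b n = ν₁ * (ν₁ ^ k * b n) := by ring
        _ ≤ ν₁ * b (n + k) := h2
        _ ≤ b (n + (k + 1)) := by rw [heq]; linarith
  have Hb2 : ∀ n k, b (n + k) ≤ ν₂ ^ k * b n := by
    intro n k
    induction k with
    | zero => simp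
    | succ k ih =>
      have h1 := hb₂ (n + k)
      have h2 : ν₂ * b (n + k) ≤ ν₂ * (ν₂ ^ k * b n) :=
        mul_le_mul_of_nonneg_left ih hν₂.le
      have heq : n + (k + 1) = (n + k) + 1 := by ring
      calc b (n + (k + 1)) ≤ ν₂ * b (n + k) := by rw [heq]; linarith
        _ ≤ ν₂ * (ν₂ ^ k * b n) := h2
        _ = ν₂ ^ (k + 1) * b n := by ring
  intro i j
  rcases le_total j i with hij | hij
  · -- i ≥ j
    set k := i - j with hk
    have hik : i = j + k := by omega
    rw [max_eq_left hij, min_eq_right hij]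
    have hb : b i ≤ ν₂ ^ k * b j := by rw [hik]; exact Hb2 j k
    have hd : (1 : ℝ) ≤ 1 + a i / a j := by
      have : 0 ≤ a i / a j := div_nonneg (hapos i).le (hapos j).le
      linarith
    have hbij : 0 ≤ b i / b j := div_nonneg (hbpos i).le (hbpos j).le
    calc (b i / b j) / (1 + a i / a j) ≤ b i / b j :=
          div_le_self hbij hd
      _ ≤ ν₂ ^ k := by
          rw [div_le_iff₀ (hbpos j)]; linarith
      _ ≤ μ ^ k := pow_le_pow_left₀ hν₂.le (le_max_right _ _) k
  · -- i ≤ j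
    set k := j - i with hk
    have hjk : j = i + k := by omega
    rw [max_eq_right hij, min_eq_left hij]
    have hb : ν₁ ^ k * b i ≤ b j := by rw [hjk]; exact Hb1 i k
    have hA : a j ≤ ν₀ ^ k * a i := by rw [hjk]; exact Ha i k
    have hp0 : (0:ℝ) < ν₀ ^ k := pow_pos h0 k
    have hp1 : (0:ℝ) < ν₁ ^ k := pow_pos hν₁ k
    have hnum : b i / b j ≤ 1 / ν₁ ^ k := by
      rw [div_le_div_iff₀ (hbpos j) hp1]
      calc b i * ν₁ ^ k = ν₁ ^ k * b i := by ring
        _ ≤ b j := hb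
        _ = 1 * b j := by ring
    have hden : 1 / ν₀ ^ k ≤ 1 + a i / a j := by
      have haij : 1 / ν₀ ^ k ≤ a i / a j := by
        rw [div_le_div_iff₀ hp0 (hapos j)]
        calc 1 * a j = a j := by ring
          _ ≤ ν₀ ^ k * a i := hA
          _ = a i * ν₀ ^ k := by ring
      linarith
    have hden0 : (0:ℝ) < 1 / ν₀ ^ k := by positivity
    have hmain : (b i / b j) / (1 + a i / a j) ≤ (1 / ν₁ ^ k) / (1 / ν₀ ^ k) :=
      div_le_div₀ (by positivity) hnum hden0 hden
    have heq : (1 / ν₁ ^ k) / (1 / ν₀ ^ k) = (ν₀ / ν₁) ^ k := by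
      rw [div_pow]; field_simp
    calc (b i / b j) / (1 + a i / a j) ≤ (1 / ν₁ ^ k) / (1 / ν₀ ^ k) := hmain
      _ = (ν₀ / ν₁) ^ k := heq
      _ ≤ μ ^ k := pow_le_pow_left₀ (by positivity) (le_max_left _ _) k
end

section
/- Let (a_n) be a strictly decreasing sequence of positive reals and (b_n) positive reals with b ∈ X for a sequence space X. Suppose φ_{ij} := (b_i/b_j)/(1 + a_i/a_j) satisfies ∑_{j=1}^∞ φ_{ij} ≤ κ for all i. Then the sequence (a_n/b_n) is summable, i.e., ∑_{n=1}^∞ a_n/b_n < ∞. -/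
theorem stmt_10 (a b : ℕ → ℝ) (κ : ℝ) (hκ : 0 < κ)
    (hapos : ∀ n, 0 < a n) (hanti : StrictAnti a) (hbpos : ∀ n, 0 < b n)
    (hrow : ∀ i : ℕ, Summable (fun j : ℕ => (b i / b j) / (1 + a i / a j)) ∧
      (∑' j : ℕ, (b i / b j) / (1 + a i / a j)) ≤ κ) :
    Summable (fun n : ℕ => a n / b n) := by
  obtain ⟨hs, -⟩ := hrow 0
  have key : ∀ j, a j / b j ≤ (2 * a 0 / b 0) * ((b 0 / b j) / (1 + a 0 / a j)) := by
    intro j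
    have haj := hapos j
    have ha0 := hapos 0
    have hbj := hbpos j
    have hb0 := hbpos 0
    have hle : a j ≤ a 0 := hanti.antitone (Nat.zero_le j)
    have hden : (0:ℝ) < 1 + a 0 / a j := by positivity
    have hrw : (b 0 / b j) / (1 + a 0 / a j) = b 0 * a j / (b j * (a j + a 0)) := by
      field_simp
    have hrw2 : (2 * a 0 / b 0) * (b 0 * a j / (b j * (a j + a 0)))
        = 2 * a 0 * a j / (b j * (a j + a 0)) := by
      field_simp
    rw [hrw, hrw2, div_le_div_iff₀ hbj (by positivity)]
    nlinarith [mul_pos haj hbj]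
  exact Summable.of_nonneg_of_le (fun n => le_of_lt (div_pos (hapos n) (hbpos n))) key (hs.mul_left _)
end

section
/- For the diagonal matrix A' = Diag(a₁,…,a_N) with pairwise distinct positive entries and b' = (b₁,…,b_N) with all b_n nonzero, the feedback gain k' with entries k'_n = −((a_n−λ_n)/b_n)·∏_{m≠n} (1 − λ_m/a_n)/(1 − a_m/a_n) satisfies: the eigenvalues of A' + b'·k' are exactly λ₁,…,λ_N. -/
open Polynomial Matrix Finset in
private lemma aux_det (N : ℕ) (d u v : Fin N → ℂ) (hd : ∀ n, d n ≠ 0) :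
    (Matrix.diagonal d - Matrix.of (fun i j => u i * v j)).det
      = (∏ n, d n) * (1 - ∑ n, v n * u n / d n) := by
  have h1 : Matrix.of (fun i j => u i * v j) = Matrix.replicateCol Unit u * Matrix.replicateRow Unit v := by
    ext i j; simp [Matrix.mul_apply]
  have hA : IsUnit (Matrix.diagonal d).det := by
    rw [Matrix.det_diagonal]
    exact (Finset.prod_ne_zero_iff.2 fun n _ => hd n).isUnit
  have h2 : Matrix.diagonal d - Matrix.of (fun i j => u i * v j)
      = Matrix.diagonal d + Matrix.replicateCol Unit (-u) * Matrix.replicateRow Unit v := by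
    rw [h1]; ext i j; simp [Matrix.mul_apply]; ring
  have hinv : (Matrix.diagonal d)⁻¹ = Matrix.diagonal (fun i => (d i)⁻¹) := by
    apply Matrix.inv_eq_right_inv
    rw [Matrix.diagonal_mul_diagonal,
      show (fun i => d i * (d i)⁻¹) = fun _ => (1 : ℂ) from funext fun i => mul_inv_cancel₀ (hd i),
      Matrix.diagonal_one]
  rw [h2, Matrix.det_add_replicateCol_mul_replicateRow hA, Matrix.det_diagonal, hinv, Matrix.det_unique]
  congr 1
  simp only [Matrix.add_apply, Matrix.one_apply_eq, Matrix.mul_apply, Matrix.replicateRow_apply,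
    Matrix.replicateCol_apply, Matrix.diagonal_apply, Pi.neg_apply,
    mul_ite, mul_zero, ite_mul, zero_mul, Finset.sum_ite_eq', Finset.mem_univ, if_true]
  rw [sub_eq_add_neg, ← Finset.sum_neg_distrib]
  exact congrArg _ (Finset.sum_congr rfl fun x _ => by rw [div_eq_mul_inv]; ring)

open Polynomial Finset in
private lemma aux_lagrange (N : ℕ) (v l : Fin N → ℂ) (hv : Function.Injective v) (z : ℂ) :
    (∏ n, (z - l n)) - ∏ n, (z - v n)
      = ∑ n, (∏ m, (v n - l m)) * ∏ m ∈ Finset.univ.erase n, ((v n - v m)⁻¹ * (z - v m)) := by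
  rcases Nat.eq_zero_or_pos N with hN | hN
  · subst hN; simp
  set f : ℂ[X] := (∏ n, (X - C (l n))) - ∏ n, (X - C (v n)) with hf
  have hm1 : (∏ n : Fin N, (X - C (l n))).Monic :=
    monic_prod_of_monic _ _ fun i _ => monic_X_sub_C _
  have hm2 : (∏ n : Fin N, (X - C (v n))).Monic :=
    monic_prod_of_monic _ _ fun i _ => monic_X_sub_C _
  have hdeg1 : (∏ n : Fin N, (X - C (l n))).degree = (N : WithBot ℕ) := by
    rw [Polynomial.degree_prod]
    simp [Polynomial.degree_X_sub_C]
  have hdeg2 : (∏ n : Fin N, (X - C (v n))).degree = (N : WithBot ℕ) := by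
    rw [Polynomial.degree_prod]
    simp [Polynomial.degree_X_sub_C]
  have hdf : f.degree < (Finset.univ : Finset (Fin N)).card := by
    have := degree_sub_lt (hdeg1.trans hdeg2.symm) hm1.ne_zero (by rw [hm1.leadingCoeff, hm2.leadingCoeff])
    rw [hdeg1] at this
    simpa using this
  have hinj : Set.InjOn v (Finset.univ : Finset (Fin N)) := fun x _ y _ h => hv h
  have key := Lagrange.eq_interpolate hinj hdf
  have heval : ∀ j, f.eval (v j) = ∏ m, (v j - l m) := by
    intro j
    simp only [hf, eval_sub, eval_prod, eval_sub, eval_X, eval_C]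
    have h0 : (∏ m : Fin N, (v j - v m)) = 0 :=
      Finset.prod_eq_zero (Finset.mem_univ j) (sub_self (v j))
    rw [h0, sub_zero]
  have hfz : f.eval z = (∏ n, (z - l n)) - ∏ n, (z - v n) := by
    simp [hf, eval_prod]
  rw [← hfz]
  calc f.eval z = (Lagrange.interpolate Finset.univ v (fun i => f.eval (v i))).eval z := by
        conv_lhs => rw [key]
    _ = _ := by
        rw [Lagrange.interpolate_apply, eval_finset_sum]
        refine Finset.sum_congr rfl fun n _ => ?_
        rw [eval_mul, eval_C, heval, Lagrange.basis, eval_prod]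
        congr 1
        refine Finset.prod_congr rfl fun m hm => ?_
        rw [Lagrange.basisDivisor, eval_mul, eval_C, eval_sub, eval_X, eval_C]

open Polynomial in
theorem stmt_11 (N : ℕ) (a : Fin N → ℝ) (b l : Fin N → ℂ)
    (hapos : ∀ n, 0 < a n) (hainj : Function.Injective a)
    (hb : ∀ n, b n ≠ 0)
    (k : Fin N → ℂ)
    (hk : ∀ n, k n = -(((a n : ℂ) - l n) / b n) *
      ∏ m ∈ Finset.univ.erase n, (1 - l m / (a n : ℂ)) / (1 - (a m : ℂ) / (a n : ℂ))) :
    (Matrix.diagonal (fun n => (a n : ℂ)) + Matrix.of (fun i j => b i * k j)).charpoly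
      = ∏ n : Fin N, (X - C (l n)) := by
  set v : Fin N → ℂ := fun n => (a n : ℂ) with hv
  have hvinj : Function.Injective v := fun x y h => hainj (by
    simp only [hv] at h; exact_mod_cast h)
  have hvne : ∀ m n : Fin N, m ≠ n → v m ≠ v n := fun m n h hc => h (hvinj hc)
  have hv0 : ∀ n, v n ≠ 0 := fun n => by
    simp only [hv, ne_eq, Complex.ofReal_eq_zero]; exact (hapos n).ne'
  -- formula for k n * b n
  have hkb : ∀ n, k n * b n = -(∏ m, (v n - l m)) * (∏ m ∈ Finset.univ.erase n, (v n - v m))⁻¹ := by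
    intro n
    have hfac : ∀ m ∈ Finset.univ.erase n,
        (1 - l m / v n) / (1 - v m / v n) = (v n - l m) / (v n - v m) := by
      intro m hm
      have hne : v n - v m ≠ 0 := sub_ne_zero.2 (hvne n m (Finset.ne_of_mem_erase hm).symm)
      have h0 : v n ≠ 0 := hv0 n
      rw [div_eq_div_iff]
      · field_simp
      · intro hc
        apply hne
        have : v m / v n = 1 := by linear_combination -hc
        rw [div_eq_one_iff_eq (hv0 n)] at this
        rw [this, sub_self]
      · exact hne
    rw [hk n, Finset.prod_congr rfl hfac]
    rw [Finset.prod_div_distrib]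
    have h1 : ∏ m ∈ Finset.univ.erase n, (v n - v m) ≠ 0 :=
      Finset.prod_ne_zero_iff.2 fun m hm => sub_ne_zero.2 (hvne n m (Finset.ne_of_mem_erase hm).symm)
    have h2 : (∏ m : Fin N, (v n - l m)) = (v n - l n) * ∏ m ∈ Finset.univ.erase n, (v n - l m) :=
      (Finset.mul_prod_erase _ _ (Finset.mem_univ n)).symm
    have hbn : b n ≠ 0 := hb n
    rw [h2]
    field_simp
    ring
  apply Polynomial.eq_of_infinite_eval_eq
  have hfin : (Set.range v).Finite := Set.finite_range v
  apply Set.Infinite.mono (s := (Set.range v)ᶜ)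
  swap
  · exact hfin.infinite_compl
  intro z hz
  have hd : ∀ n, z - v n ≠ 0 := by
    intro n hc
    exact hz ⟨n, by linear_combination -hc⟩
  -- evaluate charpoly
  have hev : Polynomial.eval z
      ((Matrix.diagonal v + Matrix.of (fun i j => b i * k j)).charpoly)
      = ((Matrix.diagonal fun n => z - v n) - Matrix.of (fun i j => b i * k j)).det := by
    have h := RingHom.map_det (Polynomial.evalRingHom z)
      ((Matrix.diagonal v + Matrix.of fun i j => b i * k j).charmatrix)
    simp only [Polynomial.coe_evalRingHom] at h
    rw [Matrix.charpoly, h]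
    congr 1
    ext i j
    by_cases hij : i = j
    · subst hij
      simp only [RingHom.mapMatrix_apply, Matrix.map_apply, Polynomial.coe_evalRingHom, Matrix.charmatrix_apply_eq, Matrix.sub_apply,
        Matrix.diagonal_apply_eq, Matrix.add_apply, Matrix.of_apply, eval_sub, eval_X, eval_C]
      ring
    · simp only [RingHom.mapMatrix_apply, Matrix.map_apply, Polynomial.coe_evalRingHom, Matrix.charmatrix_apply_ne _ _ _ hij, Matrix.sub_apply,
        Matrix.diagonal_apply_ne _ hij, Matrix.add_apply, Matrix.of_apply, eval_neg, eval_C]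
      ring
  simp only [Set.mem_setOf_eq]
  rw [hev, aux_det N (fun n => z - v n) b k hd, eval_prod]
  simp only [eval_sub, eval_X, eval_C]
  have hlag := aux_lagrange N v l hvinj z
  have hterm : ∀ n, k n * b n / (z - v n) * (∏ m, (z - v m))
      = -((∏ m, (v n - l m)) * ∏ m ∈ Finset.univ.erase n, ((v n - v m)⁻¹ * (z - v m))) := by
    intro n
    have h2 : ∏ m ∈ Finset.univ.erase n, (z - v m) ≠ 0 :=
      Finset.prod_ne_zero_iff.2 fun m _ => hd m
    have h3 : ∏ m ∈ Finset.univ.erase n, (v n - v m) ≠ 0 :=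
      Finset.prod_ne_zero_iff.2 fun m hm => sub_ne_zero.2 (hvne n m (Finset.ne_of_mem_erase hm).symm)
    have h4 := hd n
    rw [hkb n, ← Finset.mul_prod_erase _ (fun m => z - v m) (Finset.mem_univ n),
      Finset.prod_mul_distrib, ← Finset.prod_inv_distrib]
    field_simp
  calc (∏ n, (z - v n)) * (1 - ∑ n, k n * b n / (z - v n))
      = (∏ n, (z - v n)) - ∑ n, (k n * b n / (z - v n) * ∏ m, (z - v m)) := by
        rw [mul_sub, mul_one, Finset.mul_sum]
        congr 1
        exact Finset.sum_congr rfl fun n _ => by ring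
    _ = (∏ n, (z - v n)) +
        ∑ n, (∏ m, (v n - l m)) * ∏ m ∈ Finset.univ.erase n, ((v n - v m)⁻¹ * (z - v m)) := by
        rw [Finset.sum_congr rfl fun n _ => hterm n, Finset.sum_neg_distrib, sub_neg_eq_add]
    _ = ∏ n, (z - l n) := by rw [← hlag]; ring
end

section
/- Let V = [a_i^{j−1}]_{1≤i,j≤N} be the Vandermonde matrix of distinct complex numbers a₁,…,a_N, let p(z) = z^N + ∑_{n=0}^{N−1} c_n z^n = ∏_{n=1}^N (z − a_n), let L be the N×N Hankel matrix with entries L_{ij} = c_{i+j−1} for i+j ≤ N (with c_N := 1) and 0 for i+j > N+1, and D = Diag(d₁,…,d_N) where d_n = ∏_{m≠n}(a_n − a_m). Then V^{−1} = L Vᵀ D^{−1}. -/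
open Polynomial Matrix Finset in
private lemma reindex_lemma (N : ℕ) (c : ℕ → ℂ) (x y : ℂ) :
    (∑ j ∈ Finset.range N, ∑ m ∈ Finset.range N,
      (if j + m + 1 ≤ N then c (j + m + 1) * x ^ j * y ^ m else 0))
    = ∑ s ∈ Finset.range (N + 1), c s * ∑ j ∈ Finset.range s, x ^ j * y ^ (s - 1 - j) := by
  rw [← Finset.sum_product']
  rw [← Finset.sum_filter]
  simp only [Finset.mul_sum]
  rw [Finset.sum_sigma']
  refine Finset.sum_nbij' (fun p => ⟨p.1 + p.2 + 1, p.1⟩) (fun q => (q.2, q.1 - 1 - q.2))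
    ?_ ?_ ?_ ?_ ?_
  · rintro ⟨j, m⟩ h
    simp only [Finset.mem_filter, Finset.mem_product, Finset.mem_range] at h
    simp only [Finset.mem_sigma, Finset.mem_range]
    omega
  · rintro ⟨s, j⟩ h
    simp only [Finset.mem_sigma, Finset.mem_range] at h
    simp only [Finset.mem_filter, Finset.mem_product, Finset.mem_range]
    omega
  · rintro ⟨j, m⟩ h
    simp only [Finset.mem_filter, Finset.mem_product, Finset.mem_range] at h
    dsimp only
    rw [Prod.mk.injEq]
    exact ⟨rfl, by omega⟩
  · rintro ⟨s, j⟩ h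
    simp only [Finset.mem_sigma, Finset.mem_range] at h
    dsimp only
    rw [Sigma.mk.inj_iff]
    exact ⟨by omega, HEq.rfl⟩
  · rintro ⟨j, m⟩ h
    simp only [Finset.mem_filter, Finset.mem_product, Finset.mem_range] at h
    dsimp only
    have hm : j + m + 1 - 1 - j = m := by omega
    rw [hm]
    ring

open Polynomial Matrix in
/-- Indices are 0-based: `V i j = a i ^ j` corresponds to `a_i^{j-1}` with 1-based
indices; `L i j = c (i+j+1)` (with `c N = 1`) when `i + j + 1 ≤ N`, zero otherwise. -/
theorem stmt_12 (N : ℕ) (a : Fin N → ℂ) (hainj : Function.Injective a)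
    (V L D : Matrix (Fin N) (Fin N) ℂ)
    (hV : ∀ i j, V i j = a i ^ (j : ℕ))
    (hL : ∀ i j : Fin N, L i j =
      if (i : ℕ) + (j : ℕ) + 1 ≤ N
        then (∏ n : Fin N, (X - C (a n))).coeff ((i : ℕ) + (j : ℕ) + 1)
        else 0)
    (hD : D = Matrix.diagonal (fun n => ∏ m ∈ Finset.univ.erase n, (a n - a m))) :
    V⁻¹ = L * Vᵀ * D⁻¹ := by
  rcases Nat.eq_zero_or_pos N with hN | hN
  · subst hN; exact Subsingleton.elim _ _
  set p : ℂ[X] := ∏ n : Fin N, (X - C (a n)) with hp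
  have hpnodal : p = Lagrange.nodal Finset.univ a := by
    rw [Lagrange.nodal_eq]
  have hdeg : p.natDegree = N := by
    rw [hpnodal, Lagrange.natDegree_nodal]; simp
  have hroot : ∀ n : Fin N, p.eval (a n) = 0 := by
    intro n
    rw [hpnodal]
    exact Lagrange.eval_nodal_at_node (Finset.mem_univ n)
  -- d_n ≠ 0
  have hd : ∀ n : Fin N, (∏ m ∈ Finset.univ.erase n, (a n - a m)) ≠ 0 := by
    intro n
    refine Finset.prod_ne_zero_iff.mpr fun m hm => ?_
    rw [sub_ne_zero]
    exact fun h => (Finset.mem_erase.mp hm).1 (hainj h.symm)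
  have hDdet : IsUnit D.det := by
    rw [hD, Matrix.det_diagonal]
    exact (Finset.prod_ne_zero_iff.mpr fun n _ => hd n).isUnit
  -- key : V * (L * Vᵀ) = D
  have key : V * (L * Vᵀ) = D := by
    ext i k
    have entry : (V * (L * Vᵀ)) i k =
        ∑ j ∈ Finset.range N, ∑ m ∈ Finset.range N,
          (if j + m + 1 ≤ N then p.coeff (j + m + 1) * (a i) ^ j * (a k) ^ m else 0) := by
      simp only [Matrix.mul_apply, Matrix.transpose_apply, Finset.mul_sum]
      rw [← Fin.sum_univ_eq_sum_range (fun j => ∑ m ∈ Finset.range N,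
        (if j + m + 1 ≤ N then p.coeff (j + m + 1) * (a i) ^ j * (a k) ^ m else 0))]
      refine Finset.sum_congr rfl fun j _ => ?_
      rw [← Fin.sum_univ_eq_sum_range (fun m =>
        (if (j : ℕ) + m + 1 ≤ N then p.coeff ((j : ℕ) + m + 1) * (a i) ^ (j : ℕ) * (a k) ^ m else 0))]
      refine Finset.sum_congr rfl fun m _ => ?_
      rw [hV, hV, hL]
      split <;> ring
    rw [entry, reindex_lemma N p.coeff (a i) (a k)]
    rcases eq_or_ne i k with rfl | hik
    · -- diagonal: equals p'(a i)
      have h1 : ∀ s ∈ Finset.range (N + 1),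
          p.coeff s * ∑ j ∈ Finset.range s, (a i) ^ j * (a i) ^ (s - 1 - j)
          = p.coeff s * (s * (a i) ^ (s - 1)) := by
        intro s _
        congr 1
        have : ∀ j ∈ Finset.range s, (a i) ^ j * (a i) ^ (s - 1 - j) = (a i) ^ (s - 1) := by
          intro j hj
          rw [← pow_add]
          congr 1
          have := Finset.mem_range.mp hj
          omega
        rw [Finset.sum_congr rfl this, Finset.sum_const, Finset.card_range, nsmul_eq_mul]
      rw [Finset.sum_congr rfl h1]
      have hder : (∑ s ∈ Finset.range (N + 1), p.coeff s * (s * (a i) ^ (s - 1)))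
          = (derivative p).eval (a i) := by
        have hdd : (derivative p).natDegree < N := by
          calc (derivative p).natDegree ≤ p.natDegree - 1 := natDegree_derivative_le p
          _ < N := by omega
        rw [Polynomial.eval_eq_sum_range' hdd, Finset.sum_range_succ']
        simp only [Polynomial.coeff_derivative, Nat.cast_zero, zero_mul, mul_zero, add_zero,
          Nat.add_sub_cancel]
        refine Finset.sum_congr rfl fun t ht => ?_
        push_cast
        ring
      rw [hder]
      have : (derivative p).eval (a i) = ∏ m ∈ Finset.univ.erase i, (a i - a m) := by
        rw [hpnodal, Lagrange.eval_nodal_derivative_eval_node_eq (Finset.mem_univ i),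
          Lagrange.eval_nodal]
      rw [this, hD]
      simp [Matrix.diagonal_apply_eq]
    · -- off-diagonal: zero
      have hxy : a i - a k ≠ 0 := sub_ne_zero.mpr (fun h => hik (hainj h))
      have hmul : (∑ s ∈ Finset.range (N + 1),
          p.coeff s * ∑ j ∈ Finset.range s, (a i) ^ j * (a k) ^ (s - 1 - j)) * (a i - a k)
          = p.eval (a i) - p.eval (a k) := by
        rw [Finset.sum_mul]
        have : ∀ s ∈ Finset.range (N + 1),
            (p.coeff s * ∑ j ∈ Finset.range s, (a i) ^ j * (a k) ^ (s - 1 - j)) * (a i - a k)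
            = p.coeff s * ((a i) ^ s - (a k) ^ s) := by
          intro s _
          rw [mul_assoc, geom_sum₂_mul]
        rw [Finset.sum_congr rfl this]
        rw [Polynomial.eval_eq_sum_range' (by omega : p.natDegree < N + 1),
            Polynomial.eval_eq_sum_range' (by omega : p.natDegree < N + 1),
            ← Finset.sum_sub_distrib]
        exact Finset.sum_congr rfl fun s _ => by ring
      rw [hroot i, hroot k, sub_zero] at hmul
      have := mul_eq_zero.mp hmul
      rcases this with h | h
      · rw [h, hD]
        simp [Matrix.diagonal_apply_ne _ hik]
      · exact absurd h hxy
  have hright : V * (L * Vᵀ * D⁻¹) = 1 := by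
    rw [show L * Vᵀ * D⁻¹ = (L * Vᵀ) * D⁻¹ from rfl, ← Matrix.mul_assoc, key,
      Matrix.mul_nonsing_inv D hDdet]
  exact Matrix.inv_eq_right_inv hright
end

section
/- For distinct positive reals a₁,…,a_N, define π_n(N) := 2·∏_{m≠n, m≤N} (1 + a_m/a_n)/(1 − a_m/a_n). Then the inverse of the Cauchy matrix [1/(a_i + a_j)]_{1≤i,j≤N} is the matrix [a_i a_j π_i(N) π_j(N)/(a_i + a_j)]_{1≤i,j≤N}. -/
open Finset Polynomial

lemma lag_eval {N : ℕ} (a : Fin N → ℝ) (hainj : Function.Injective a) (f : Polynomial ℝ)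
    (hf : f.degree < N) (b : ℝ) :
    f.eval b = ∑ j, f.eval (a j) * ∏ m ∈ Finset.univ.erase j, ((b - a m) / (a j - a m)) := by
  have hinj : Set.InjOn a (Finset.univ : Finset (Fin N)) := hainj.injOn
  have h := Lagrange.eq_interpolate (s := (Finset.univ : Finset (Fin N))) (v := a) hinj (by simpa using hf)
  conv_lhs => rw [h]
  simp [Lagrange.interpolate_apply, Lagrange.basis, Lagrange.basisDivisor, eval_prod,
    div_eq_inv_mul, eval_finset_sum]

lemma key_sum {N : ℕ} (a : Fin N → ℝ)
    (hapos : ∀ n, 0 < a n) (hainj : Function.Injective a)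
    (π : Fin N → ℝ)
    (hπ : ∀ n, π n = 2 * ∏ m ∈ Finset.univ.erase n, (1 + a m / a n) / (1 - a m / a n))
    (i k : Fin N) :
    ∑ j, (1 / (a i + a j)) * (a j * a k * π j * π k / (a j + a k))
      = if i = k then 1 else 0 := by
  have hNpos : 0 < N := Fin.pos i
  set g : ℝ → ℝ := fun x => ∏ m, (x + a m) with hg
  set d : Fin N → ℝ := fun j => ∏ m ∈ Finset.univ.erase j, (a j - a m) with hd
  set ε : ℝ := (-1) ^ (N - 1) with hε
  have hεsq : ε * ε = 1 := by
    rw [hε, ← pow_add, ← two_mul, pow_mul, neg_one_sq, one_pow]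
  have hsumne : ∀ p q : Fin N, a p + a q ≠ 0 := fun p q =>
    ne_of_gt (add_pos (hapos p) (hapos q))
  have hgne : ∀ p : Fin N, g (a p) ≠ 0 := fun p =>
    ne_of_gt (Finset.prod_pos fun m _ => add_pos (hapos p) (hapos m))
  have hdiffne : ∀ j m : Fin N, m ≠ j → a j - a m ≠ 0 := fun j m hm =>
    sub_ne_zero.mpr fun h => hm (hainj h.symm)
  have hdne : ∀ j : Fin N, d j ≠ 0 := fun j =>
    Finset.prod_ne_zero_iff.mpr fun m hm => hdiffne j m (Finset.mem_erase.mp hm).1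
  -- product over erase in terms of g
  have hprod : ∀ q j : Fin N, ∏ m ∈ Finset.univ.erase j, (a q + a m) = g (a q) / (a q + a j) := by
    intro q j
    rw [eq_div_iff (hsumne q j), hg, mul_comm]
    exact Finset.mul_prod_erase Finset.univ (fun m => a q + a m) (Finset.mem_univ j)
  -- a j * π j = g (a j) / d j
  have hw : ∀ j : Fin N, a j * π j = g (a j) / d j := by
    intro j
    have hane : a j ≠ 0 := ne_of_gt (hapos j)
    have h1 : ∀ m ∈ Finset.univ.erase j,
        (1 + a m / a j) / (1 - a m / a j) = (a j + a m) / (a j - a m) := by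
      intro m hm
      have hne : a j - a m ≠ 0 := hdiffne j m (Finset.mem_erase.mp hm).1
      have hne' : 1 - a m / a j ≠ 0 := by
        rw [sub_ne_zero]
        intro h
        have hm' : a m = a j := by field_simp at h; linarith
        exact (Finset.mem_erase.mp hm).1 (hainj hm')
      rw [div_eq_div_iff hne' hne]
      field_simp
    have hgj : (a j + a j) * ∏ m ∈ Finset.univ.erase j, (a j + a m) = g (a j) := by
      rw [hg]
      exact Finset.mul_prod_erase Finset.univ (fun m => a j + a m) (Finset.mem_univ j)
    have hdj : (∏ m ∈ Finset.univ.erase j, (a j - a m)) = d j := rfl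
    have h6 := hdne j
    rw [hπ j, Finset.prod_congr rfl h1, Finset.prod_div_distrib, hdj, ← hgj]
    field_simp
    ring
  -- the sign product
  have hQ : ∀ j : Fin N, ∏ m ∈ Finset.univ.erase j, ((-(a i) - a m) / (a j - a m))
      = ε * (g (a i) / (a i + a j)) / d j := by
    intro j
    rw [Finset.prod_div_distrib,
      show (∏ m ∈ Finset.univ.erase j, (a j - a m)) = d j from rfl]
    congr 1
    have h2 : ∀ m ∈ Finset.univ.erase j, -(a i) - a m = (-1) * (a i + a m) := by
      intro m _; ring
    rw [Finset.prod_congr rfl h2, Finset.prod_mul_distrib, Finset.prod_const,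
      Finset.card_erase_of_mem (Finset.mem_univ j), Finset.card_univ, Fintype.card_fin,
      hprod i j, hε]
  -- the polynomial and interpolation identity
  have h0 : ∏ m ∈ Finset.univ.erase k, (-(a i) + a m)
      = ∑ x, (g (a x) / (a x + a k)) * (ε * (g (a i) / (a i + a x)) / d x) := by
    set p : Polynomial ℝ := ∏ m ∈ Finset.univ.erase k, (X + C (a m)) with hp
    have hpeval : ∀ x : ℝ, p.eval x = ∏ m ∈ Finset.univ.erase k, (x + a m) := by
      intro x; rw [hp, eval_prod]; simp
    have hcard : (Finset.univ.erase k).card = N - 1 := by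
      rw [Finset.card_erase_of_mem (Finset.mem_univ k), Finset.card_univ, Fintype.card_fin]
    have hpdeg : p.degree < N := by
      have h1 : p.natDegree ≤ N - 1 := by
        rw [hp]
        refine le_trans (Polynomial.natDegree_prod_le _ _) ?_
        rw [← hcard]
        refine le_trans (Finset.sum_le_card_nsmul _ _ 1 ?_) (by simp)
        intro m _; exact le_of_eq (Polynomial.natDegree_X_add_C _)
      calc p.degree ≤ (p.natDegree : WithBot ℕ) := Polynomial.degree_le_natDegree
        _ ≤ ((N - 1 : ℕ) : WithBot ℕ) := by exact_mod_cast h1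
        _ < (N : WithBot ℕ) := by exact_mod_cast Nat.sub_lt hNpos one_pos
    have h0 := lag_eval a hainj p hpdeg (-(a i))
    simp only [hpeval] at h0
    rw [h0]
    refine Finset.sum_congr rfl fun x _ => ?_
    rw [hprod x k, hQ x]
  -- rewrite the goal sum using hw
  have hrw : ∀ j : Fin N, (1 / (a i + a j)) * (a j * a k * π j * π k / (a j + a k))
      = (1 / (a i + a j)) * ((g (a j) / d j) * (g (a k) / d k) / (a j + a k)) := by
    intro j
    rw [show a j * a k * π j * π k = (a j * π j) * (a k * π k) by ring, hw j, hw k]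
  have hdj : ∀ j : Fin N, (∏ m ∈ Finset.univ.erase j, (a j - a m)) = d j := fun j => rfl
  rw [Finset.sum_congr rfl fun j _ => hrw j]
  clear_value g d ε
  clear hg hd hw
  -- termwise identity
  have hterm : ∀ j : Fin N,
      (1 / (a i + a j)) * ((g (a j) / d j) * (g (a k) / d k) / (a j + a k))
        = (g (a k) / d k) * ε / g (a i) *
          ((g (a j) / (a j + a k)) * (ε * (g (a i) / (a i + a j)) / d j)) := by
    intro j
    have h2 : (g (a k) / d k) * ε / g (a i) *
          ((g (a j) / (a j + a k)) * (ε * (g (a i) / (a i + a j)) / d j))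
        = (ε * ε) * ((g (a k) / d k) / g (a i) *
          ((g (a j) / (a j + a k)) * ((g (a i) / (a i + a j)) / d j))) := by ring
    rw [h2, hεsq, one_mul]
    have h4 := hsumne i j
    have h5 := hsumne j k
    have h6 := hdne j
    have h7 := hdne k
    have h8 := hgne i
    field_simp
  rw [Finset.sum_congr rfl fun j _ => hterm j, ← Finset.mul_sum, ← h0]
  by_cases hik : i = k
  · subst hik
    have hL : ∏ m ∈ Finset.univ.erase i, (-(a i) + a m) = ε * d i := by
      have h2 : ∀ m ∈ Finset.univ.erase i, -(a i) + a m = (-1) * (a i - a m) := by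
        intro m _; ring
      rw [Finset.prod_congr rfl h2, Finset.prod_mul_distrib, Finset.prod_const,
        Finset.card_erase_of_mem (Finset.mem_univ i), Finset.card_univ, Fintype.card_fin,
        ← hε, hdj i]
    rw [hL, if_pos rfl]
    have h3 : g (a i) / d i * ε / g (a i) * (ε * d i)
        = (ε * ε) * ((g (a i) / d i) * d i / g (a i)) := by ring
    rw [h3, hεsq, one_mul, div_mul_cancel₀ _ (hdne i), div_self (hgne i)]
  · rw [if_neg hik]
    have hL : ∏ m ∈ Finset.univ.erase k, (-(a i) + a m) = 0 :=
      Finset.prod_eq_zero (Finset.mem_erase.mpr ⟨hik, Finset.mem_univ i⟩) (by ring)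
    rw [hL, mul_zero]

theorem stmt_13 (N : ℕ) (a : Fin N → ℝ)
    (hapos : ∀ n, 0 < a n) (hainj : Function.Injective a)
    (π : Fin N → ℝ)
    (hπ : ∀ n, π n = 2 * ∏ m ∈ Finset.univ.erase n, (1 + a m / a n) / (1 - a m / a n)) :
    (Matrix.of fun i j : Fin N => 1 / (a i + a j))⁻¹
      = Matrix.of fun i j : Fin N => a i * a j * π i * π j / (a i + a j) := by
  refine Matrix.inv_eq_right_inv ?_
  ext i k
  rw [Matrix.mul_apply, Matrix.one_apply]
  simp only [Matrix.of_apply]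
  exact key_sum a hapos hainj π hπ i k
end

section
/- Let (a_n) be a strictly decreasing null sequence of positive reals, and let π_i be reals with (a_iπ_i) summable. Let T̃ = A + 𝟏k̃, where A = Diag(a₁,a₂,…) acts on a sequence space and k̃ = (−a_nπ_n) ∈ ℓ¹. If ∑_{i=1}^∞ a_iπ_i/(a_i+a_j) = 1 for all j, then the vector P_j := (a_jπ_j/(a_i + a_j))_{i∈ℕ} satisfies T̃P_j = −a_j·P_j. -/
theorem stmt_15 (a π : ℕ → ℝ)
    (hapos : ∀ n, 0 < a n) (hanti : StrictAnti a)
    (hnull : Filter.Tendsto a Filter.atTop (nhds 0))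
    (hsum : Summable (fun n => a n * π n))
    (hnorm : ∀ j : ℕ, (∑' i : ℕ, a i * π i / (a i + a j)) = 1) :
    ∀ j i : ℕ,
      a i * (a j * π j / (a i + a j))
        - (∑' m : ℕ, a m * π m * (a j * π j / (a m + a j)))
      = -a j * (a j * π j / (a i + a j)) := by
  intro j i
  have hS : (∑' m : ℕ, a m * π m * (a j * π j / (a m + a j))) = a j * π j := by
    calc (∑' m : ℕ, a m * π m * (a j * π j / (a m + a j)))
        = ∑' m : ℕ, (a j * π j) * (a m * π m / (a m + a j)) := by
          apply tsum_congr; intro m; ring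
      _ = (a j * π j) * ∑' m : ℕ, a m * π m / (a m + a j) := tsum_mul_left
      _ = a j * π j := by rw [hnorm j, mul_one]
  rw [hS]
  have hne : a i + a j ≠ 0 := ne_of_gt (by linarith [hapos i, hapos j])
  field_simp
  ring
end
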